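/- Rigidity when the interior induces no edges, finite n: let (G,m,w,B) be a connected finite weighted graph with boundary with E(Ω,Ω) = ∅, satisfying CD(K,n) with K > 0 and 2 < n < ∞, and σ₂ = nK/(n−1). Then |Ω| = 1; denoting the boundary vertices 1,2 and the interior vertex x, one has m₁ = m₂ = m, w_{1x} = w_{2x} = mnK/(n−1), and m_x = 2nm/(n+2). (In particular |V(G)| = 3 and G is a path.) -/

import Mathlib

open Finset

variable {V : Type*} [Fintype V] [DecidableEq V]

/-- The weighted graph Laplacian: `Δu(x) = (1/m x) ∑_y (u y - u x) w x y`. -/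
noncomputable def glap (m : V → ℝ) (w : V → V → ℝ) (u : V → ℝ) (x : V) : ℝ :=
  (1 / m x) * ∑ y, (u y - u x) * w x y

/-- The carré du champ operator `Γ(u,v) = (1/2)(Δ(uv) - vΔu - uΔv)`. -/
noncomputable def gGam (m : V → ℝ) (w : V → V → ℝ) (u v : V → ℝ) (x : V) : ℝ :=
  (1 / 2) * (glap m w (fun z => u z * v z) x - v x * glap m w u x - u x * glap m w v x)

/-- The iterated carré du champ `Γ₂(u,v) = (1/2)(ΔΓ(u,v) - Γ(Δu,v) - Γ(u,Δv))`. -/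
noncomputable def gGam2 (m : V → ℝ) (w : V → V → ℝ) (u v : V → ℝ) (x : V) : ℝ :=
  (1 / 2) * (glap m w (gGam m w u v) x - gGam m w (glap m w u) v x - gGam m w u (glap m w v) x)

/-- Vertex inner product `⟨u,v⟩ = ∑_x u x v x m x`. -/
noncomputable def vip (m : V → ℝ) (u v : V → ℝ) : ℝ := ∑ x, u x * v x * m x

/-- Edge (1-form) inner product of differentials:
`⟨du,dv⟩ = ∑_{{x,y}∈E} (u y - u x)(v y - v x) w x y = (1/2)∑_{x,y}`. -/
noncomputable def eip (w : V → V → ℝ) (u v : V → ℝ) : ℝ :=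
  (1 / 2) * ∑ x, ∑ y, (u y - u x) * (v y - v x) * w x y

/-- `(m,w)` is a weighted graph structure: positive vertex measure, symmetric
nonnegative edge weights, no loops. -/
def WeightedGraph (m : V → ℝ) (w : V → V → ℝ) : Prop :=
  (∀ x, 0 < m x) ∧ (∀ x y, w x y = w y x) ∧ (∀ x y, 0 ≤ w x y) ∧ (∀ x, w x x = 0)

/-- The underlying simple graph: `x ∼ y` iff `w x y > 0`. -/
def wgraph (w : V → V → ℝ) : SimpleGraph V := SimpleGraph.fromRel (fun x y => 0 < w x y)

/-- The Bakry-Émery curvature-dimension condition `CD(K,n)`. -/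
def CD (m : V → ℝ) (w : V → V → ℝ) (K n : ℝ) : Prop :=
  ∀ (f : V → ℝ) (x : V), gGam2 m w f f x ≥ (1 / n) * (glap m w f x) ^ 2 + K * gGam m w f f x

/-- `B` is a vertex boundary: nonempty, independent, and every boundary vertex is
adjacent to some interior vertex. -/
def GraphBoundary (w : V → V → ℝ) (B : Finset V) : Prop :=
  B.Nonempty ∧ (∀ x ∈ B, ∀ y ∈ B, w x y = 0) ∧ (∀ x ∈ B, ∃ y, y ∉ B ∧ 0 < w x y)

/-- `σ` is a Steklov eigenvalue: there is `u`, harmonic on the interior, with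
boundary restriction nonzero, and `∂u/∂n = σ u` on `B`. -/
def SteklovEig (m : V → ℝ) (w : V → V → ℝ) (B : Finset V) (σ : ℝ) : Prop :=
  ∃ u : V → ℝ, (∃ x ∈ B, u x ≠ 0) ∧ (∀ x, x ∉ B → glap m w u x = 0) ∧
    (∀ x ∈ B, - glap m w u x = σ * u x)

/-- `μ` is an eigenvalue of `-Δ`. -/
def LapEig (m : V → ℝ) (w : V → V → ℝ) (μ : ℝ) : Prop :=
  ∃ u : V → ℝ, u ≠ 0 ∧ ∀ x, - glap m w u x = μ * u x

/-- The edge weight of the induced graph on the interior `Ω = Bᶜ`. -/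
def wRes (B : Finset V) (w : V → V → ℝ) : V → V → ℝ :=
  fun x y => if x ∈ B ∨ y ∈ B then 0 else w x y

/-!
Summed against `m`, the `CD(K,n)` defect of a Steklov eigenfunction `u` with eigenvalue
`σ = nK/(n-1)` is zero; being pointwise nonnegative, the defect vanishes at `u` everywhere, and
by polarization `u` lies in the radical of the defect form at every vertex. Testing against
delta functions: `u = 0` at interior vertices next to the boundary, a boundary vertex with
`u ≠ 0` has degree `σ m`, an interior one degree `(3σ - 2K) m`, and two boundary vertices with
a common neighbour carry opposite values of `u`. Harmonicity then leaves every interior vertex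
with exactly two neighbours, joined by equal weights. Two interior vertices sharing a neighbour
share both, and then `CD(K,n)` fails for `δ_x - δ_z`; by connectivity a single interior vertex
remains, and the degree identities give the weights and the measures.
-/

set_option linter.unusedSectionVars false

section Calculus

variable (m : V → ℝ) (w : V → V → ℝ)

lemma glap_add_mul (a b : V → ℝ) (c : ℝ) (x : V) :
    glap m w (fun z => a z + c * b z) x = glap m w a x + c * glap m w b x := by
  simp only [glap, Finset.mul_sum, ← Finset.sum_add_distrib]
  exact Finset.sum_congr rfl fun y _ => by ring

lemma gGam_eq_sum (u v : V → ℝ) (x : V) :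
    gGam m w u v x = (1 / (2 * m x)) * ∑ y, (u y - u x) * (v y - v x) * w x y := by
  simp only [gGam, glap, Finset.mul_sum, ← Finset.sum_sub_distrib]
  exact Finset.sum_congr rfl fun y _ => by ring

lemma gGam_comm (u v : V → ℝ) (x : V) : gGam m w u v x = gGam m w v u x := by
  simp only [gGam_eq_sum, mul_comm (u _ - u x)]

lemma gGam_add_mul_add_mul (a b c d : V → ℝ) (s t : ℝ) (x : V) :
    gGam m w (fun z => a z + s * b z) (fun z => c z + t * d z) x
      = gGam m w a c x + s * gGam m w b c x + t * gGam m w a d x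
        + s * t * gGam m w b d x := by
  simp only [gGam_eq_sum, Finset.mul_sum, ← Finset.sum_add_distrib]
  exact Finset.sum_congr rfl fun y _ => by ring

lemma gGam2_comm (u v : V → ℝ) (x : V) : gGam2 m w u v x = gGam2 m w v u x := by
  have h : gGam m w u v = gGam m w v u := funext (gGam_comm m w u v)
  rw [gGam2, gGam2, h, gGam_comm m w (glap m w u), gGam_comm m w u]
  ring

lemma gGam2_add_mul_self (u f : V → ℝ) (t : ℝ) (x : V) :
    gGam2 m w (fun z => u z + t * f z) (fun z => u z + t * f z) x
      = gGam2 m w u u x + t * (gGam2 m w u f x + gGam2 m w f u x)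
        + t ^ 2 * gGam2 m w f f x := by
  have hΓ : gGam m w (fun z => u z + t * f z) (fun z => u z + t * f z)
      = fun y => (gGam m w u u y + t * gGam m w f u y) + t * gGam m w u f y
        + (t * t) * gGam m w f f y :=
    funext fun y => gGam_add_mul_add_mul m w u f u f t t y
  have hΔ : glap m w (fun z => u z + t * f z) = fun y => glap m w u y + t * glap m w f y :=
    funext (glap_add_mul m w u f t)
  rw [gGam2, hΔ, hΓ, glap_add_mul, glap_add_mul, glap_add_mul, gGam_add_mul_add_mul,
    gGam_add_mul_add_mul, gGam2, gGam2, gGam2, gGam2]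
  ring

noncomputable def cdDefect (K n : ℝ) (f g : V → ℝ) (x : V) : ℝ :=
  gGam2 m w f g x - (1 / n) * (glap m w f x * glap m w g x) - K * gGam m w f g x

lemma cdDefect_add_mul_self (K n : ℝ) (u f : V → ℝ) (t : ℝ) (x : V) :
    cdDefect m w K n (fun z => u z + t * f z) (fun z => u z + t * f z) x
      = cdDefect m w K n u u x + 2 * t * cdDefect m w K n u f x
        + t ^ 2 * cdDefect m w K n f f x := by
  simp only [cdDefect, gGam2_add_mul_self, glap_add_mul, gGam_add_mul_add_mul,
    gGam2_comm m w f u, gGam_comm m w f u]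
  ring

end Calculus

lemma CD.cdDefect_nonneg {m : V → ℝ} {w : V → V → ℝ} {K n : ℝ} (h : CD m w K n) (f : V → ℝ)
    (x : V) : 0 ≤ cdDefect m w K n f f x := by
  have := h f x
  rw [cdDefect, ← sq]
  linarith

lemma CD.cdDefect_eq_zero_of_self {m : V → ℝ} {w : V → V → ℝ} {K n : ℝ} (h : CD m w K n)
    {u : V → ℝ} {x : V} (hu : cdDefect m w K n u u x = 0) (f : V → ℝ) :
    cdDefect m w K n u f x = 0 := by
  have hdisc := discrim_le_zero (a := cdDefect m w K n f f x) (b := 2 * cdDefect m w K n u f x)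
    (c := 0) fun t => by
      have := h.cdDefect_nonneg (fun z => u z + t * f z) x
      rw [cdDefect_add_mul_self, hu] at this
      linarith
  rw [discrim] at hdisc
  nlinarith

section Green

variable {m : V → ℝ} {w : V → V → ℝ}

lemma vip_glap (hm : ∀ x, m x ≠ 0) (hw : ∀ x y, w x y = w y x) (u v : V → ℝ) :
    vip m v (glap m w u) = - eip w u v := by
  have hexpand : vip m v (glap m w u) = ∑ x, ∑ y, v x * (u y - u x) * w x y := by
    refine Finset.sum_congr rfl fun x _ => ?_
    rw [glap, Finset.mul_sum, Finset.mul_sum, Finset.sum_mul]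
    refine Finset.sum_congr rfl fun y _ => ?_
    field_simp [hm x]
  have hswap : ∑ x, ∑ y, v x * (u y - u x) * w x y = ∑ x, ∑ y, v y * (u x - u y) * w x y := by
    rw [Finset.sum_comm]
    simp only [hw]
  have hsum : ∑ x, ∑ y, v x * (u y - u x) * w x y + ∑ x, ∑ y, v y * (u x - u y) * w x y
      = - ∑ x, ∑ y, (u y - u x) * (v y - v x) * w x y := by
    simp only [← Finset.sum_add_distrib, ← Finset.sum_neg_distrib]
    exact Finset.sum_congr rfl fun x _ => Finset.sum_congr rfl fun y _ => by ring
  rw [eip]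
  linarith

lemma sum_gGam_mul (hm : ∀ x, m x ≠ 0) (u v : V → ℝ) :
    ∑ x, gGam m w u v x * m x = eip w u v := by
  simp only [gGam_eq_sum, eip, Finset.mul_sum, Finset.sum_mul]
  refine Finset.sum_congr rfl fun x _ => Finset.sum_congr rfl fun y _ => ?_
  field_simp [hm x]

lemma sum_gGam2_self_mul (hm : ∀ x, m x ≠ 0) (hw : ∀ x y, w x y = w y x) (u : V → ℝ) :
    ∑ x, gGam2 m w u u x * m x = vip m (glap m w u) (glap m w u) := by
  have hΔ : ∑ x, glap m w (gGam m w u u) x * m x = 0 := by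
    simpa [vip, eip] using vip_glap hm hw (gGam m w u u) (fun _ => 1)
  have hΓ : ∑ x, gGam m w (glap m w u) u x * m x = - vip m (glap m w u) (glap m w u) := by
    rw [sum_gGam_mul hm, vip_glap hm hw u (glap m w u), neg_neg, eip, eip]
    congr 1
    exact Finset.sum_congr rfl fun x _ => Finset.sum_congr rfl fun y _ => by ring
  have hsplit : ∑ x, gGam2 m w u u x * m x = (1 / 2) * (∑ x, glap m w (gGam m w u u) x * m x
      - 2 * ∑ x, gGam m w (glap m w u) u x * m x) := by
    simp only [gGam2, gGam_comm m w u (glap m w u), Finset.mul_sum,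
      ← Finset.sum_sub_distrib]
    exact Finset.sum_congr rfl fun x _ => by ring
  rw [hsplit, hΔ, hΓ]
  ring

/-- Integrated against `m`, the defect is `(K - σ(n-1)/n) ∑ m u Δu = 0`, while it is pointwise
nonnegative. -/
lemma cdDefect_self_eq_zero_of_steklov {B : Finset V} {K n σ : ℝ} {u : V → ℝ}
    (hm : ∀ x, 0 < m x) (hw : ∀ x y, w x y = w y x) (hCD : CD m w K n) (hn : n ≠ 0)
    (hσ : σ * (n - 1) = n * K) (hharm : ∀ x, x ∉ B → glap m w u x = 0)
    (heig : ∀ x ∈ B, - glap m w u x = σ * u x) (x : V) : cdDefect m w K n u u x = 0 := by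
  have hm' : ∀ x, m x ≠ 0 := fun x => (hm x).ne'
  have hsq : vip m (glap m w u) (glap m w u) = -σ * vip m u (glap m w u) := by
    simp only [vip, Finset.mul_sum]
    refine Finset.sum_congr rfl fun x _ => ?_
    by_cases hx : x ∈ B
    · rw [show glap m w u x = -(σ * u x) by linarith [heig x hx]]
      ring
    · rw [hharm x hx]
      ring
  have htotal : ∑ x, cdDefect m w K n u u x * m x = 0 := by
    have hsplit : ∑ x, cdDefect m w K n u u x * m x = ∑ x, gGam2 m w u u x * m x
        - (1 / n) * vip m (glap m w u) (glap m w u) - K * ∑ x, gGam m w u u x * m x := by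
      simp only [cdDefect, vip, Finset.mul_sum, ← Finset.sum_sub_distrib]
      exact Finset.sum_congr rfl fun x _ => by ring
    rw [hsplit, sum_gGam2_self_mul hm' hw, sum_gGam_mul hm', ← neg_neg (eip w u u),
      ← vip_glap hm' hw, hsq]
    have hK : K = σ * (n - 1) / n := by field_simp; linarith
    rw [hK]
    field_simp
    ring
  have hall := (Finset.sum_eq_zero_iff_of_nonneg fun x _ =>
    mul_nonneg (hCD.cdDefect_nonneg u x) (hm x).le).mp htotal x (Finset.mem_univ x)
  exact (mul_eq_zero.mp hall).resolve_right (hm' x)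

end Green

section Deltas

variable (m : V → ℝ) (w : V → V → ℝ)

lemma glap_single_of_ne {x z : V} (hxz : x ≠ z) :
    glap m w (Pi.single z 1) x = w x z / m x := by
  simp only [glap, Pi.single_apply, if_neg hxz, sub_zero, ite_mul, one_mul, zero_mul,
    Finset.sum_ite_eq', Finset.mem_univ, if_true]
  ring

lemma glap_single_self {z : V} (hzz : w z z = 0) :
    glap m w (Pi.single z 1) z = -(∑ y, w z y) / m z := by
  have h : ∀ y, ((Pi.single z 1 : V → ℝ) y - (Pi.single z 1 : V → ℝ) z) * w z y = -w z y :=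
      fun y => by
    by_cases hy : y = z
    · subst hy; simp [hzz]
    · simp [hy]
  simp only [glap, h, Finset.sum_neg_distrib]
  ring

lemma gGam_single_of_ne (u : V → ℝ) {x z : V} (hxz : x ≠ z) :
    gGam m w u (Pi.single z 1) x = (u z - u x) * w x z / (2 * m x) := by
  simp only [gGam_eq_sum, Pi.single_apply, if_neg hxz, sub_zero, mul_ite, ite_mul, mul_one,
    mul_zero, zero_mul, Finset.sum_ite_eq', Finset.mem_univ, if_true]
  ring

lemma gGam_single_self (u : V → ℝ) (z : V) :
    gGam m w u (Pi.single z 1) z = -(1 / 2) * glap m w u z := by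
  have h : ∀ y, (u y - u z) * ((Pi.single z 1 : V → ℝ) y - (Pi.single z 1 : V → ℝ) z) * w z y
      = -((u y - u z) * w z y) := fun y => by
    by_cases hy : y = z
    · subst hy; simp
    · simp [hy]
      ring
  simp only [gGam_eq_sum, glap, h, Finset.sum_neg_distrib]
  field_simp

lemma gGam2_single_of_not_adj (u : V → ℝ) {p q : V} (hpq : p ≠ q) (h0 : w p q = 0) :
    gGam2 m w u (Pi.single q 1) p
      = (1 / (4 * m p)) * ∑ y, w p y * w y q / m y * (u p + u q - 2 * u y) := by
  have hΓ : ∀ y, (gGam m w u (Pi.single q 1) y - gGam m w u (Pi.single q 1) p) * w p y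
      = (u q - u y) * w y q / (2 * m y) * w p y := fun y => by
    rw [gGam_single_of_ne m w u hpq, h0]
    by_cases hy : y = q
    · subst hy; simp [h0]
    · rw [gGam_single_of_ne m w u hy]; ring
  have hΔ : ∀ y, (u y - u p) * (glap m w (Pi.single q 1) y - glap m w (Pi.single q 1) p) * w p y
      = (u y - u p) * (w y q / m y) * w p y := fun y => by
    rw [glap_single_of_ne m w hpq, h0]
    by_cases hy : y = q
    · subst hy; simp [h0]
    · rw [glap_single_of_ne m w hy]; ring
  rw [gGam2, gGam_single_of_ne m w _ hpq, gGam_eq_sum, glap]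
  simp only [hΓ, hΔ, h0, mul_zero, zero_div, sub_zero, Finset.mul_sum, ← Finset.sum_sub_distrib]
  exact Finset.sum_congr rfl fun y _ => by ring

lemma gGam2_single_of_no_common (u : V → ℝ) {x p : V} (hmx : m x ≠ 0) (hxp : x ≠ p)
    (hc : ∀ y, w x y * w y p = 0) (hpp : w p p = 0) :
    gGam2 m w u (Pi.single p 1) x
      = w x p / (4 * m x) * (-2 * glap m w u p + 2 * glap m w u x
          + ((∑ y, w p y) / m p - (∑ y, w x y) / m x) * (u p - u x)) := by
  have hΓ : ∀ y, (gGam m w u (Pi.single p 1) y - gGam m w u (Pi.single p 1) x) * w x y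
      = -((u p - u x) * w x p / (2 * m x)) * w x y
        + if y = p then -(1 / 2) * glap m w u p * w x p else 0 := fun y => by
    rw [gGam_single_of_ne m w u hxp]
    by_cases hy : y = p
    · subst hy; rw [gGam_single_self, if_pos rfl]; ring
    · rw [gGam_single_of_ne m w u hy, if_neg hy]
      linear_combination (u p - u y) / (2 * m y) * hc y
  have hΔ : ∀ y, (u y - u x) * (glap m w (Pi.single p 1) y - glap m w (Pi.single p 1) x) * w x y
      = -(w x p / m x) * ((u y - u x) * w x y)
        + if y = p then (u p - u x) * (-(∑ z, w p z) / m p) * w x p else 0 := fun y => by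
    rw [glap_single_of_ne m w hxp]
    by_cases hy : y = p
    · subst hy; rw [glap_single_self m w hpp, if_pos rfl]; ring
    · rw [glap_single_of_ne m w hy, if_neg hy]
      linear_combination (u y - u x) / m y * hc y
  rw [gGam2, gGam_single_of_ne m w _ hxp, gGam_eq_sum, glap.eq_1 m w (gGam m w u _)]
  simp only [hΓ, hΔ, Finset.sum_add_distrib, ← Finset.mul_sum, Finset.sum_ite_eq',
    Finset.mem_univ, if_true]
  rw [show ∑ y, (u y - u x) * w x y = m x * glap m w u x by
    rw [glap, ← mul_assoc, mul_one_div_cancel hmx, one_mul]]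
  field_simp
  ring

lemma gGam2_single_self {x : V} (hxx : w x x = 0) :
    gGam2 m w (Pi.single x 1) (Pi.single x 1) x
      = 3 / (4 * m x) * ∑ y, w x y * w y x / m y + ((∑ y, w x y) / m x) ^ 2 / 4 := by
  have hΓx : gGam m w (Pi.single x 1) (Pi.single x 1) x = (∑ y, w x y) / (2 * m x) := by
    rw [gGam_single_self, glap_single_self m w hxx]
    ring
  have hΓ : ∀ y, (gGam m w (Pi.single x 1) (Pi.single x 1) y
        - gGam m w (Pi.single x 1) (Pi.single x 1) x) * w x y
      = (1 / 2) * (w x y * w y x / m y) - (∑ z, w x z) / (2 * m x) * w x y := fun y => by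
    rw [hΓx]
    by_cases hy : y = x
    · subst hy; simp [hxx]
    · rw [gGam_single_of_ne m w _ hy, Pi.single_eq_same, Pi.single_eq_of_ne hy]
      ring
  have hΔ : ∀ y, (glap m w (Pi.single x 1) y - glap m w (Pi.single x 1) x) * w x y
      = w x y * w y x / m y + (∑ z, w x z) / m x * w x y := fun y => by
    rw [glap_single_self m w hxx]
    by_cases hy : y = x
    · subst hy; simp [hxx]
    · rw [glap_single_of_ne m w hy]
      ring
  rw [gGam2, gGam_comm m w (Pi.single x 1), gGam_single_self, glap, glap.eq_1 m w (glap m w _)]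
  simp only [hΓ, hΔ, Finset.sum_add_distrib, Finset.sum_sub_distrib, ← Finset.mul_sum]
  ring

lemma cdDefect_single_of_not_adj (K n : ℝ) (u : V → ℝ) {p q : V} (hpq : p ≠ q)
    (h0 : w p q = 0) :
    cdDefect m w K n u (Pi.single q 1) p
      = (1 / (4 * m p)) * ∑ y, w p y * w y q / m y * (u p + u q - 2 * u y) := by
  rw [cdDefect, gGam2_single_of_not_adj m w u hpq h0, glap_single_of_ne m w hpq,
    gGam_single_of_ne m w u hpq, h0]
  ring

lemma cdDefect_single_of_no_common (K n : ℝ) (u : V → ℝ) {x p : V} (hmx : m x ≠ 0)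
    (hxp : x ≠ p) (hc : ∀ y, w x y * w y p = 0) (hpp : w p p = 0) :
    cdDefect m w K n u (Pi.single p 1) x
      = w x p / (4 * m x) * (-2 * glap m w u p + 2 * glap m w u x
          + ((∑ y, w p y) / m p - (∑ y, w x y) / m x) * (u p - u x)
          - 4 / n * glap m w u x - 2 * K * (u p - u x)) := by
  rw [cdDefect, gGam2_single_of_no_common m w u hmx hxp hc hpp, glap_single_of_ne m w hxp,
    gGam_single_of_ne m w u hxp]
  ring

lemma cdDefect_single_sub_single (K n : ℝ) {x z : V} (hxz : x ≠ z) (h0 : w x z = 0)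
    (hxx : w x x = 0) (hzz : w z z = 0) :
    cdDefect m w K n (Pi.single x 1 - Pi.single z 1) (Pi.single x 1 - Pi.single z 1) x
      = (3 * ∑ y, w x y * w y x / m y - ∑ y, w x y * w y z / m y) / (4 * m x)
        + (1 / 4 - 1 / n) * ((∑ y, w x y) / m x) ^ 2 - K * (∑ y, w x y) / (2 * m x) := by
  have hxz' : cdDefect m w K n (Pi.single x 1) (Pi.single z 1) x
      = (1 / (4 * m x)) * ∑ y, w x y * w y z / m y := by
    rw [cdDefect_single_of_not_adj m w K n _ hxz h0]
    congr 1
    refine Finset.sum_congr rfl fun y _ => ?_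
    by_cases hy : y = x
    · subst hy; simp [hxx]
    · rw [Pi.single_eq_same, Pi.single_eq_of_ne hxz.symm, Pi.single_eq_of_ne hy]
      ring
  have hzz' : cdDefect m w K n (Pi.single z 1) (Pi.single z 1) x
      = (1 / (4 * m x)) * ∑ y, w x y * w y z / m y := by
    rw [cdDefect_single_of_not_adj m w K n _ hxz h0]
    congr 1
    refine Finset.sum_congr rfl fun y _ => ?_
    by_cases hy : y = z
    · subst hy; simp [hzz]
    · rw [Pi.single_eq_same, Pi.single_eq_of_ne hxz, Pi.single_eq_of_ne hy]
      ring
  have hsub : (Pi.single x 1 - Pi.single z 1 : V → ℝ)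
      = fun y => (Pi.single x 1 : V → ℝ) y + (-1) * (Pi.single z 1 : V → ℝ) y := by
    funext y
    simp only [Pi.sub_apply]
    ring
  rw [hsub, cdDefect_add_mul_self, hxz', hzz', cdDefect, gGam2_single_self m w hxx,
    gGam_single_self, glap_single_self m w hxx]
  ring

end Deltas

lemma SimpleGraph.Preconnected.mem_of_adj_closed {G : SimpleGraph V} (hG : G.Preconnected)
    {S : Set V} {a : V} (ha : a ∈ S) (hS : ∀ v ∈ S, ∀ v', G.Adj v v' → v' ∈ S) (v : V) :
    v ∈ S := by
  obtain ⟨p⟩ := hG a v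
  induction p with
  | nil => exact ha
  | cons hadj _ ih => exact ih (hS _ ha _ hadj)

lemma wgraph_adj_iff {w : V → V → ℝ} (hw : ∀ x y, w x y = w y x) {a b : V} :
    (wgraph w).Adj a b ↔ a ≠ b ∧ 0 < w a b := by
  rw [wgraph, SimpleGraph.fromRel_adj, hw b a, or_self]

structure IsSteklovEqualityCase (m : V → ℝ) (w : V → V → ℝ) (B : Finset V) (K n σ : ℝ)
    (u : V → ℝ) : Prop where
  m_pos : ∀ x, 0 < m x
  w_symm : ∀ x y, w x y = w y x
  w_nonneg : ∀ x y, 0 ≤ w x y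
  w_self : ∀ x, w x x = 0
  boundary_indep : ∀ x ∈ B, ∀ y ∈ B, w x y = 0
  interior_indep : ∀ x, x ∉ B → ∀ y, y ∉ B → w x y = 0
  K_pos : 0 < K
  one_lt_n : 1 < n
  cd : CD m w K n
  sigma_mul : σ * (n - 1) = n * K
  harmonic : ∀ x, x ∉ B → glap m w u x = 0
  steklov : ∀ x ∈ B, -glap m w u x = σ * u x

namespace IsSteklovEqualityCase

variable {m : V → ℝ} {w : V → V → ℝ} {B : Finset V} {K n σ : ℝ} {u : V → ℝ}

lemma cdDefect_eq_zero (h : IsSteklovEqualityCase m w B K n σ u) (f : V → ℝ) (x : V) :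
    cdDefect m w K n u f x = 0 :=
  h.cd.cdDefect_eq_zero_of_self (cdDefect_self_eq_zero_of_steklov h.m_pos h.w_symm h.cd
    (by linarith [h.one_lt_n]) h.sigma_mul h.harmonic h.steklov x) f

lemma K_eq (h : IsSteklovEqualityCase m w B K n σ u) : K = σ - σ / n := by
  have hn : n ≠ 0 := by linarith [h.one_lt_n]
  field_simp
  linarith [h.sigma_mul]

lemma sigma_pos (h : IsSteklovEqualityCase m w B K n σ u) : 0 < σ := by
  have := h.sigma_mul
  nlinarith [h.K_pos, h.one_lt_n]

lemma mem_of_adj (h : IsSteklovEqualityCase m w B K n σ u) {x y : V} (hx : x ∉ B)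
    (hxy : 0 < w x y) : y ∈ B := by
  by_contra hy
  exact hxy.ne' (h.interior_indep x hx y hy)

/-- The vanishing of the defect at `x` tested on `δ_p`, and at `p` tested on `δ_x`. -/
lemma defect_eqs_of_adj (h : IsSteklovEqualityCase m w B K n σ u) {x p : V} (hx : x ∉ B)
    (hp : p ∈ B) (hxp : 0 < w x p) :
    2 * σ * u p + ((∑ y, w p y) / m p - (∑ y, w x y) / m x) * (u p - u x)
        - 2 * K * (u p - u x) = 0 ∧
      -2 * σ * u p + ((∑ y, w p y) / m p - (∑ y, w x y) / m x) * (u p - u x)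
        + 4 / n * σ * u p + 2 * K * (u p - u x) = 0 := by
  have hxp' : x ≠ p := fun hxp' => hx (hxp' ▸ hp)
  have hc : ∀ y, w x y * w y p = 0 := fun y => by
    by_cases hy : y ∈ B
    · rw [h.boundary_indep y hy p hp, mul_zero]
    · rw [h.interior_indep x hx y hy, zero_mul]
  have hc' : ∀ y, w p y * w y x = 0 := fun y => by
    rw [h.w_symm p y, h.w_symm y x, mul_comm]
    exact hc y
  have hΔp : glap m w u p = -(σ * u p) := by linarith [h.steklov p hp]
  have at_x := h.cdDefect_eq_zero (Pi.single p 1) x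
  have at_p := h.cdDefect_eq_zero (Pi.single x 1) p
  rw [cdDefect_single_of_no_common m w K n u (h.m_pos x).ne' hxp' hc (h.w_self p),
    h.harmonic x hx, hΔp] at at_x
  rw [cdDefect_single_of_no_common m w K n u (h.m_pos p).ne' hxp'.symm hc' (h.w_self x),
    h.harmonic x hx, hΔp, h.w_symm p x] at at_p
  have hx4 : w x p / (4 * m x) ≠ 0 := (div_pos hxp (by linarith [h.m_pos x])).ne'
  have hp4 : w x p / (4 * m p) ≠ 0 := (div_pos hxp (by linarith [h.m_pos p])).ne'
  constructor
  · linear_combination (mul_eq_zero.mp at_x).resolve_left hx4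
  · linear_combination (mul_eq_zero.mp at_p).resolve_left hp4

lemma eq_zero_of_adj (h : IsSteklovEqualityCase m w B K n σ u) {x p : V} (hx : x ∉ B)
    (hp : p ∈ B) (hxp : 0 < w x p) : u x = 0 := by
  obtain ⟨at_x, at_p⟩ := h.defect_eqs_of_adj hx hp hxp
  have hKu : K * u x = 0 := by linear_combination (at_x - at_p) / 4 + u p * h.K_eq
  exact (mul_eq_zero.mp hKu).resolve_left h.K_pos.ne'

lemma weight_mul_eq_zero (h : IsSteklovEqualityCase m w B K n σ u) {p y : V} (hp : p ∈ B)
    (hy : y ∉ B) : w p y * u y = 0 := by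
  rcases (h.w_nonneg p y).eq_or_lt with h0 | hpos
  · rw [← h0, zero_mul]
  · rw [h.eq_zero_of_adj hy hp (by rwa [h.w_symm]), mul_zero]

lemma boundary_degree (h : IsSteklovEqualityCase m w B K n σ u) {p : V} (hp : p ∈ B)
    (hup : u p ≠ 0) : ∑ y, w p y = σ * m p := by
  have hterm : ∀ y, (u y - u p) * w p y = -(u p * w p y) := fun y => by
    by_cases hy : y ∈ B
    · rw [h.boundary_indep p hp y hy]; ring
    · linear_combination h.weight_mul_eq_zero hp hy
  have hΔp := h.steklov p hp
  rw [glap, Finset.sum_congr rfl fun y _ => hterm y, Finset.sum_neg_distrib,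
    ← Finset.mul_sum] at hΔp
  have hmp := (h.m_pos p).ne'
  field_simp at hΔp
  linarith

lemma interior_degree (h : IsSteklovEqualityCase m w B K n σ u) {x p : V} (hx : x ∉ B)
    (hp : p ∈ B) (hxp : 0 < w x p) (hup : u p ≠ 0) :
    (∑ y, w x y) / m x = 3 * σ - 2 * K := by
  have at_x := (h.defect_eqs_of_adj hx hp hxp).1
  rw [h.eq_zero_of_adj hx hp hxp, h.boundary_degree hp hup,
    mul_div_cancel_right₀ _ (h.m_pos p).ne'] at at_x
  have : u p * (3 * σ - 2 * K - (∑ y, w x y) / m x) = 0 := by linear_combination at_x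
  linarith [(mul_eq_zero.mp this).resolve_left hup]

lemma sum_two_step_eq_zero (h : IsSteklovEqualityCase m w B K n σ u) {p q : V} (hpq : p ≠ q)
    (h0 : w p q = 0) : ∑ y, w p y * w y q / m y * (u p + u q - 2 * u y) = 0 := by
  have hdef := h.cdDefect_eq_zero (Pi.single q 1) p
  rw [cdDefect_single_of_not_adj m w K n u hpq h0] at hdef
  exact (mul_eq_zero.mp hdef).resolve_left (by have := h.m_pos p; positivity)

lemma eq_neg_of_common_nbr (h : IsSteklovEqualityCase m w B K n σ u) {x r s : V}
    (hr : r ∈ B) (hs : s ∈ B) (hrs : r ≠ s) (hxr : 0 < w x r) (hxs : 0 < w x s) :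
    u s = -u r := by
  have hterm : ∀ y, w r y * w y s / m y * (u r + u s - 2 * u y)
      = (u r + u s) * (w r y * w y s / m y) := fun y => by
    by_cases hy : y ∈ B
    · rw [h.boundary_indep y hy s hs]; ring
    · linear_combination (-2 * w y s / m y) * h.weight_mul_eq_zero hr hy
  have hpos : 0 < ∑ y, w r y * w y s / m y := by
    refine Finset.sum_pos' (fun y _ => ?_) ⟨x, Finset.mem_univ x, ?_⟩
    · have := h.w_nonneg r y; have := h.w_nonneg y s; have := h.m_pos y
      positivity
    · have := h.m_pos x
      rw [h.w_symm r x]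
      positivity
  have hsum := h.sum_two_step_eq_zero hrs (h.boundary_indep r hr s hs)
  rw [Finset.sum_congr rfl fun y _ => hterm y, ← Finset.mul_sum] at hsum
  linarith [(mul_eq_zero.mp hsum).resolve_right hpos.ne']

lemma exists_partner (h : IsSteklovEqualityCase m w B K n σ u) {x b : V} (hx : x ∉ B)
    (hb : b ∈ B) (hub : u b ≠ 0) (hxb : 0 < w x b) :
    ∃ c ∈ B, c ≠ b ∧ u c = -u b ∧ w x c = w x b ∧ ∀ y, y ≠ b → y ≠ c → w x y = 0 := by
  have hux := h.eq_zero_of_adj hx hb hxb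
  have hharm : ∑ y, u y * w x y = 0 := by
    have hΔx := h.harmonic x hx
    rw [glap, hux] at hΔx
    simpa [(h.m_pos x).ne'] using hΔx
  obtain ⟨c, hcb, hxc⟩ : ∃ c, c ≠ b ∧ 0 < w x c := by
    by_contra! hnone
    rw [Fintype.sum_eq_single b fun y hy => by
      rw [le_antisymm (hnone y hy) (h.w_nonneg x y), mul_zero]] at hharm
    exact mul_ne_zero hub hxb.ne' hharm
  have hc := h.mem_of_adj hx hxc
  have huc := h.eq_neg_of_common_nbr hb hc hcb.symm hxb hxc
  have hsupp : ∀ y, y ≠ b → y ≠ c → w x y = 0 := fun y hyb hyc => by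
    by_contra hy
    have hxy := lt_of_le_of_ne (h.w_nonneg x y) (Ne.symm hy)
    have hyB := h.mem_of_adj hx hxy
    have h1 := h.eq_neg_of_common_nbr hb hyB (Ne.symm hyb) hxb hxy
    have h2 := h.eq_neg_of_common_nbr hc hyB (Ne.symm hyc) hxc hxy
    exact hub (by linarith)
  rw [Fintype.sum_eq_add b c hcb.symm fun y hy => by rw [hsupp y hy.1 hy.2, mul_zero],
    huc] at hharm
  have hweq : u b * (w x b - w x c) = 0 := by linear_combination hharm
  refine ⟨c, hc, hcb, huc, ?_, hsupp⟩
  linarith [(mul_eq_zero.mp hweq).resolve_left hub]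

lemma partner_eq (h : IsSteklovEqualityCase m w B K n σ u) {x z b c c' : V} (hx : x ∉ B)
    (hz : z ∉ B) (hxz : x ≠ z) (hb : b ∈ B) (hub : u b ≠ 0) (hxb : 0 < w x b)
    (hzb : 0 < w z b) (hcb : c ≠ b) (hx_supp : ∀ y, y ≠ b → y ≠ c → w x y = 0)
    (hz_supp : ∀ y, y ≠ b → y ≠ c' → w z y = 0) : c' = c := by
  by_contra hc'
  have hsum := h.sum_two_step_eq_zero hxz (h.interior_indep x hx z hz)
  rw [Fintype.sum_eq_single b fun y hyb => by
      by_cases hyc : y = c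
      · rw [hyc, h.w_symm c z, hz_supp c hcb (Ne.symm hc')]; ring
      · rw [hx_supp y hyb hyc]; ring,
    h.eq_zero_of_adj hx hb hxb, h.eq_zero_of_adj hz hb hzb, h.w_symm b z] at hsum
  have := h.m_pos b
  have : w x b * w z b / m b * (0 + 0 - 2 * u b) ≠ 0 :=
    mul_ne_zero (by positivity) (by simpa using hub)
  exact this hsum

/-- Otherwise `CD(K,n)` fails at `x` for `δ_x - δ_z`. -/
lemma eq_of_shared_nbrs (h : IsSteklovEqualityCase m w B K n σ u) {x z P Q : V} (hx : x ∉ B)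
    (hz : z ∉ B) (hP : P ∈ B) (hQ : Q ∈ B) (hPQ : P ≠ Q) (huP : u P ≠ 0)
    (hxP : 0 < w x P) (hxQ : w x Q = w x P) (hzQ : w z Q = w z P)
    (hx_supp : ∀ y, y ≠ P → y ≠ Q → w x y = 0) (hle : w x P ≤ w z P) : x = z := by
  by_contra hxz
  have hDx : ∑ y, w x y = 2 * w x P := by
    rw [Fintype.sum_eq_add P Q hPQ fun y hy => hx_supp y hy.1 hy.2, hxQ]
    ring
  have hsum_pair : ∀ g : V → ℝ, ∑ y, w x y * g y = w x P * (g P + g Q) := fun g => by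
    rw [Fintype.sum_eq_add P Q hPQ fun y hy => by rw [hx_supp y hy.1 hy.2, zero_mul], hxQ]
    ring
  have hSxx : ∑ y, w x y * w y x / m y = w x P * (w x P / m P + w x P / m Q) := by
    simp only [mul_div_assoc]
    rw [hsum_pair, h.w_symm P x, h.w_symm Q x, hxQ]
  have hSxz : ∑ y, w x y * w y z / m y = w x P * (w z P / m P + w z P / m Q) := by
    simp only [mul_div_assoc]
    rw [hsum_pair, h.w_symm P z, h.w_symm Q z, hzQ]
  have huQ : u Q ≠ 0 := by
    rw [h.eq_neg_of_common_nbr hP hQ hPQ hxP (hxQ ▸ hxP)]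
    exact neg_ne_zero.mpr huP
  have hdeg : ∀ p ∈ B, u p ≠ 0 → w p x + w p z ≤ σ * m p := fun p hp hup => by
    rw [← h.boundary_degree hp hup]
    exact Finset.add_le_sum (fun y _ => h.w_nonneg p y) (Finset.mem_univ x)
      (Finset.mem_univ z) hxz
  have hdegP := hdeg P hP huP
  have hdegQ := hdeg Q hQ huQ
  rw [h.w_symm P x, h.w_symm P z] at hdegP
  rw [h.w_symm Q x, h.w_symm Q z, hxQ, hzQ] at hdegQ
  have hmP := h.m_pos P
  have hmQ := h.m_pos Q
  have hmx := h.m_pos x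
  have h3S : 3 * (∑ y, w x y * w y x / m y) - ∑ y, w x y * w y z / m y
      ≤ σ * ∑ y, w x y := by
    have hPb : (3 * w x P - w z P) / m P ≤ σ := by rw [div_le_iff₀ hmP]; linarith
    have hQb : (3 * w x P - w z P) / m Q ≤ σ := by rw [div_le_iff₀ hmQ]; linarith
    rw [hSxx, hSxz, hDx]
    have : 3 * (w x P * (w x P / m P + w x P / m Q)) - w x P * (w z P / m P + w z P / m Q)
        = w x P * ((3 * w x P - w z P) / m P + (3 * w x P - w z P) / m Q) := by ring
    rw [this]
    nlinarith
  have ht := h.interior_degree hx hP hxP huP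
  have hcd := h.cd.cdDefect_nonneg (Pi.single x 1 - Pi.single z 1) x
  rw [cdDefect_single_sub_single m w K n hxz (h.interior_indep x hx z hz) (h.w_self x)
    (h.w_self z), ht, mul_div_assoc, show (∑ y, w x y) / (2 * m x) = (3 * σ - 2 * K) / 2 by
      rw [← ht]; field_simp] at hcd
  have hfirst : (3 * (∑ y, w x y * w y x / m y) - ∑ y, w x y * w y z / m y) / (4 * m x)
      ≤ σ * (3 * σ - 2 * K) / 4 := by
    rw [div_le_iff₀ (by positivity), ← ht]
    field_simp
    linarith
  have hn : 0 < n := by linarith [h.one_lt_n]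
  have hσ := h.sigma_pos
  have hneg : σ * (3 * σ - 2 * K) / 4 + (1 / 4 - 1 / n) * (3 * σ - 2 * K) ^ 2
      - K * ((3 * σ - 2 * K) / 2) = -2 * σ * (σ + 2 * σ / n) * (1 / n) ^ 2 := by
    rw [h.K_eq]
    ring
  have : 0 < σ * (σ + 2 * σ / n) * (1 / n) ^ 2 := by positivity
  linarith

lemma eq_of_common_nbr (h : IsSteklovEqualityCase m w B K n σ u) {x z b : V} (hx : x ∉ B)
    (hz : z ∉ B) (hb : b ∈ B) (hub : u b ≠ 0) (hxb : 0 < w x b) (hzb : 0 < w z b) : x = z := by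
  by_contra hxz
  obtain ⟨c, hc, hcb, -, hxc, hx_supp⟩ := h.exists_partner hx hb hub hxb
  obtain ⟨c', -, -, -, hzc', hz_supp⟩ := h.exists_partner hz hb hub hzb
  obtain rfl := h.partner_eq hx hz hxz hb hub hxb hzb hcb hx_supp hz_supp
  rcases le_total (w x b) (w z b) with hle | hle
  · exact hxz (h.eq_of_shared_nbrs hx hz hb hc hcb.symm hub hxb hxc hzc' hx_supp hle)
  · exact hxz (h.eq_of_shared_nbrs hz hx hb hc hcb.symm hub hzb hzc' hxc hz_supp hle).symm

lemma eq_or_adj_of_connected (h : IsSteklovEqualityCase m w B K n σ u)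
    (hconn : (wgraph w).Connected) {x p : V} (hx : x ∉ B) (hp : p ∈ B) (hup : u p ≠ 0)
    (hxp : 0 < w x p) (v : V) : v = x ∨ 0 < w v x := by
  refine hconn.preconnected.mem_of_adj_closed (S := {v | v = x ∨ 0 < w v x}) (Or.inl rfl)
    (fun v hv v' hadj => ?_) v
  obtain ⟨hvv', hpos⟩ := (wgraph_adj_iff h.w_symm).mp hadj
  rcases hv with rfl | hvx
  · exact Or.inr (by rwa [h.w_symm])
  have hxv : 0 < w x v := by rwa [h.w_symm]
  have hv := h.mem_of_adj hx hxv
  have hv' : v' ∉ B := fun hv' => hpos.ne' (h.boundary_indep v hv v' hv')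
  have huv : u v ≠ 0 := by
    by_cases hvp : v = p
    · rwa [hvp]
    · rw [h.eq_neg_of_common_nbr hp hv (Ne.symm hvp) hxp hxv]
      exact neg_ne_zero.mpr hup
  exact Or.inl (h.eq_of_common_nbr hv' hx hv huv (by rwa [h.w_symm]) hxv)

theorem rigidity (h : IsSteklovEqualityCase m w B K n σ u) (hconn : (wgraph w).Connected)
    {p x : V} (hp : p ∈ B) (hup : u p ≠ 0) (hx : x ∉ B) (hpx : 0 < w p x) :
    ∃ q, p ≠ q ∧ B = {p, q} ∧ Bᶜ = {x} ∧ m p = m q ∧ w p x = σ * m p ∧ w q x = σ * m p ∧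
      (3 * σ - 2 * K) * m x = 2 * σ * m p := by
  have hxp : 0 < w x p := by rwa [h.w_symm]
  obtain ⟨q, hq, hqp, huq, hxq, hx_supp⟩ := h.exists_partner hx hp hup hxp
  have hstar := h.eq_or_adj_of_connected hconn hx hp hup hxp
  have hΩ : Bᶜ = {x} := by
    ext v
    rw [Finset.mem_compl, Finset.mem_singleton]
    refine ⟨fun hv => (hstar v).resolve_right fun hvx => ?_, fun hv => hv ▸ hx⟩
    exact hvx.ne' (h.interior_indep v hv x hx)
  have hB : B = {p, q} := by
    ext v
    rw [Finset.mem_insert, Finset.mem_singleton]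
    refine ⟨fun hv => ?_, by rintro (rfl | rfl) <;> assumption⟩
    have hvx := (hstar v).resolve_left fun hvx => hx (hvx ▸ hv)
    by_contra! hne
    exact hvx.ne' (by rw [h.w_symm, hx_supp v hne.1 hne.2])
  have hdeg : ∀ r ∈ B, u r ≠ 0 → w r x = σ * m r := fun r hr hur => by
    rw [← h.boundary_degree hr hur, Fintype.sum_eq_single x fun y hyx =>
      h.boundary_indep r hr y (by
        by_contra hy
        exact hyx (Finset.mem_singleton.mp (hΩ ▸ Finset.mem_compl.mpr hy)))]
  have huq' : u q ≠ 0 := by rw [huq]; exact neg_ne_zero.mpr hup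
  have hmpq : m p = m q := by
    have := hdeg q hq huq'
    rw [h.w_symm, hxq, h.w_symm, hdeg p hp hup] at this
    exact mul_left_cancel₀ h.sigma_pos.ne' this
  have hmx := h.interior_degree hx hp hxp hup
  rw [Fintype.sum_eq_add p q hqp.symm fun y hy => hx_supp y hy.1 hy.2, hxq, h.w_symm,
    hdeg p hp hup] at hmx
  refine ⟨q, hqp.symm, hB, hΩ, hmpq, hdeg p hp hup, ?_, ?_⟩
  · rw [hdeg q hq huq', hmpq]
  · rw [← hmx]
    field_simp [(h.m_pos x).ne']
    ring

end IsSteklovEqualityCase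

theorem stmt17_general (m : V → ℝ) (w : V → V → ℝ) (B : Finset V) (hW : WeightedGraph m w)
    (hconn : (wgraph w).Connected) (hB : GraphBoundary w B)
    (hEmpty : ∀ x, x ∉ B → ∀ y, y ∉ B → w x y = 0)
    (K n : ℝ) (hK : 0 < K) (hn : 2 < n) (hCD : CD m w K n)
    (hs1 : SteklovEig m w B (n * K / (n - 1))) :
    Fintype.card V = 3 ∧ Bᶜ.card = 1 ∧
    ∃ p q x : V, p ≠ q ∧ B = {p, q} ∧ x ∉ B ∧
      m p = m q ∧
      w p x = m p * n * K / (n - 1) ∧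
      w q x = m p * n * K / (n - 1) ∧
      m x = 2 * n * m p / (n + 2) := by
  obtain ⟨hm, hsymm, hnn, hloop⟩ := hW
  obtain ⟨-, hBind, hBnbr⟩ := hB
  obtain ⟨u, ⟨p, hp, hup⟩, hharm, heig⟩ := hs1
  have hn1 : n - 1 ≠ 0 := by linarith
  have h : IsSteklovEqualityCase m w B K n (n * K / (n - 1)) u :=
    ⟨hm, hsymm, hnn, hloop, hBind, hEmpty, hK, by linarith, hCD, by field_simp, hharm, heig⟩
  obtain ⟨x, hx, hpx⟩ := hBnbr p hp
  obtain ⟨q, hpq, hBpq, hΩ, hmpq, hwp, hwq, hmx⟩ := h.rigidity hconn hp hup hx hpx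
  have hcard := Finset.card_add_card_compl B
  rw [hBpq, Finset.card_pair hpq, ← hBpq, hΩ, Finset.card_singleton] at hcard
  refine ⟨hcard.symm, by rw [hΩ, Finset.card_singleton], p, q, x, hpq, hBpq, hx, hmpq,
    by rw [hwp]; ring, by rw [hwq]; ring, ?_⟩
  rw [eq_div_iff (by linarith)]
  field_simp at hmx
  linear_combination hmx

/-- rigidity when the interior induces no edges and `2 < n < ∞`:
the graph is a path on three vertices, with the stated measures and weights. -/
theorem stmt17 (m : V → ℝ) (w : V → V → ℝ) (B : Finset V) (hW : WeightedGraph m w)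
    (hconn : (wgraph w).Connected) (hB : GraphBoundary w B)
    (hEmpty : ∀ x, x ∉ B → ∀ y, y ∉ B → w x y = 0)
    (K n : ℝ) (hK : 0 < K) (hn : 2 < n) (hCD : CD m w K n)
    (hs1 : SteklovEig m w B (n * K / (n - 1)))
    (hs2 : ∀ σ : ℝ, SteklovEig m w B σ → 0 < σ → n * K / (n - 1) ≤ σ) :
    Fintype.card V = 3 ∧ Bᶜ.card = 1 ∧
    ∃ p q x : V, p ≠ q ∧ B = {p, q} ∧ x ∉ B ∧
      m p = m q ∧
      w p x = m p * n * K / (n - 1) ∧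
      w q x = m p * n * K / (n - 1) ∧
      m x = 2 * n * m p / (n + 2) :=
  stmt17_general m w B hW hconn hB hEmpty K n hK hn hCD hs1
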